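/- Let C be a communicating set under E in a stochastic game, let s¹∈C, and let (σ^ε)_{ε>0} be a family of strategy profiles such that (a) σ^ε is an ε-perturbation of E for every ε>0, and (b) the limit exit probability μ(s¹,(σ^ε)_{ε>0},C;s,a) exists for every exit (s,a)∈𝓔(C). If (s,a)∈𝓔(C) is an exit with μ(s¹,(σ^ε)_{ε>0},C;s,a) > 0, then there exists an action profile a'∈A such that (W.1) q(C|s,a')=1, and (W.2) a' differs from a in the action of exactly one player. -/

import Mathlib

open Filter Topology
open scoped Classical

noncomputable section

/-- A probability distribution on a finite type, given as a vector of nonnegative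
real numbers summing to one. -/
def ProbVec (X : Type*) [Fintype X] : Type _ :=
  {p : X → ℝ // (∀ x, 0 ≤ p x) ∧ ∑ x, p x = 1}

instance instNonemptyProbVec {X : Type*} [Fintype X] [Nonempty X] : Nonempty (ProbVec X) := by
  refine ⟨⟨fun _ => (Fintype.card X : ℝ)⁻¹, fun _ => by positivity, ?_⟩⟩
  have h : (Fintype.card X : ℝ) ≠ 0 := Nat.cast_ne_zero.mpr Fintype.card_ne_zero
  simp [Finset.sum_const, Finset.card_univ, nsmul_eq_mul, mul_inv_cancel₀ h]

/-- The Dirac (pure) distribution concentrated at `x`. -/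
def pureDist {X : Type*} [Fintype X] (x : X) : ProbVec X :=
  ⟨fun y => if y = x then 1 else 0, fun y => by dsimp only; split <;> norm_num, by simp⟩

/-- An action profile: one action for each player. -/
abbrev ActProf {ι : Type*} (A : ι → Type*) := ∀ i, A i

/-- A finite history of a stochastic game: the list of past (state, action profile)
pairs, in reverse chronological order, together with the current state. -/
abbrev Hist (S : Type*) {ι : Type*} (A : ι → Type*) : Type _ := List (S × ActProf A) × S

/-- The product distribution on action profiles induced by a mixed action of each player. -/
def prodDist {ι : Type*} {A : ι → Type*} [Fintype ι] [DecidableEq ι] [∀ i, Fintype (A i)]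
    (x : ∀ i, ProbVec (A i)) : ProbVec (ActProf A) := by
  refine ⟨fun a => ∏ i, (x i).1 (a i),
    fun a => Finset.prod_nonneg fun i _ => (x i).2.1 _, ?_⟩
  rw [← Fintype.prod_sum (fun i (b : A i) => (x i).1 b)]
  simp [fun i => (x i).2.2]

/-- A multiplayer stochastic game with player set `ι`, state set `S`, and action
sets `A i` (the same at every state). `u` is the payoff function and `q` the
transition function. -/
structure StochGame (ι S : Type*) (A : ι → Type*) [Fintype ι] [DecidableEq ι]
    [Fintype S] [∀ i, Fintype (A i)] where
  u : ι → S → ActProf A → ℝ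
  q : S → ActProf A → S → ℝ
  q_nonneg : ∀ s a s', 0 ≤ q s a s'
  q_sum : ∀ s a, ∑ s', q s a s' = 1

namespace StochGame

variable {ι S : Type*} {A : ι → Type*} [Fintype ι] [DecidableEq ι] [Fintype S]
  [∀ i, Fintype (A i)] [Nonempty S] [∀ i, Nonempty (A i)]

variable (ι S A) in
/-- A correlated strategy: a map from finite histories to correlated mixed actions. -/
abbrev CorrStrategy := Hist S A → ProbVec (ActProf A)

variable (ι S A) in
/-- A (behavior) strategy profile: for each player, a map from finite histories to
mixed actions of that player. -/
abbrev Profile := ∀ i, Hist S A → ProbVec (A i)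

/-- The correlated strategy induced by a strategy profile. -/
def corrOf (σ : Profile ι S A) : CorrStrategy ι S A := fun h => prodDist (fun i => σ i h)

/-- A stationary strategy profile, determined by a mixed action of each player at each state. -/
def statProf (x : ∀ i, S → ProbVec (A i)) : Profile ι S A := fun i h => x i h.2

/-- A stationary correlated strategy, determined by a correlated mixed action at each state. -/
def statCorr (y : S → ProbVec (ActProf A)) : CorrStrategy ι S A := fun h => y h.2

/-- A strategy profile is stationary if each player's mixed action depends only on the
current state. -/
def IsStationary (σ : Profile ι S A) : Prop := ∃ x, σ = statProf x

/-- A strategy profile is pure stationary if each player plays a deterministic action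
depending only on the current state. -/
def IsPureStationary (σ : Profile ι S A) : Prop :=
  ∃ c : ∀ i, S → A i, σ = fun i h => pureDist (c i h.2)

/-- The continuation correlated strategy of `τ` after the finite history `h`. -/
def contC (τ : CorrStrategy ι S A) (h : Hist S A) : CorrStrategy ι S A :=
  fun h' => τ (h'.1 ++ h.1, h'.2)

variable (G : StochGame ι S A)

/-- The probability, under the correlated strategy `τ` with initial state `s1`, that
the play follows the given finite history (list of past (state, action) pairs in reverse
chronological order, then the current state). -/
def hprob (τ : CorrStrategy ι S A) (s1 : S) : List (S × ActProf A) → S → ℝ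
  | [], s => if s = s1 then 1 else 0
  | p :: l, s => hprob τ s1 l p.1 * (τ (l, p.1)).1 p.2 * G.q p.1 p.2 s

/-- The expected payoff of player `i` at stage `n+1` (so that `n` past stages have
elapsed) under the correlated strategy `τ` with initial state `s1`. -/
def stagePay (τ : CorrStrategy ι S A) (s1 : S) (i : ι) (n : ℕ) : ℝ :=
  ∑ f : Fin n → S × ActProf A, ∑ s : S,
    G.hprob τ s1 (List.ofFn f) s * ∑ a : ActProf A, (τ (List.ofFn f, s)).1 a * G.u i s a

/-- The `lam`-discounted payoff of player `i` at the initial state `s1` under the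
correlated strategy `τ`. -/
def disc (lam : ℝ) (i : ι) (s1 : S) (τ : CorrStrategy ι S A) : ℝ :=
  (1 - lam) * ∑' n : ℕ, lam ^ n * G.stagePay τ s1 i n

/-- The `lam`-discounted payoff of player `i` at the initial state `s1` under the
strategy profile `σ`. -/
def discP (lam : ℝ) (i : ι) (s1 : S) (σ : Profile ι S A) : ℝ :=
  G.disc lam i s1 (corrOf σ)

/-- Replace player `i`'s strategy in the profile `σ` by `τi`. -/
def replaceStrat (σ : Profile ι S A) (i : ι) (τi : Hist S A → ProbVec (A i)) :
    Profile ι S A :=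
  fun j => if h : j = i then cast (by rw [h]) τi else σ j

/-- The `lam`-discounted min-max value of player `i` at the initial state `s`. -/
def vlam (lam : ℝ) (i : ι) (s : S) : ℝ :=
  ⨅ σ : Profile ι S A, ⨆ τi : Hist S A → ProbVec (A i),
    G.discP lam i s (replaceStrat σ i τi)

/-- The uniform min-max value of player `i` at state `s`: the limit of the
`lam`-discounted min-max values as `lam → 1`. -/
def v1 (i : ι) (s : S) : ℝ := limUnder (𝓝[<] (1 : ℝ)) (fun lam => G.vlam lam i s)

/-- A correlated strategy is `w`-acceptable if for every sufficiently large discount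
factor it yields each player `i` at least `w s i` from every initial state `s`. -/
def WAcceptableCorr (w : S → ι → ℝ) (τ : CorrStrategy ι S A) : Prop :=
  ∃ lam0 : ℝ, 0 ≤ lam0 ∧ lam0 < 1 ∧
    ∀ (i : ι) (s1 : S) (lam : ℝ), lam0 ≤ lam → lam < 1 → w s1 i ≤ G.disc lam i s1 τ

/-- A strategy profile is `w`-acceptable if for every sufficiently large discount
factor it yields each player `i` at least `w s i` from every initial state `s`. -/
def WAcceptable (w : S → ι → ℝ) (σ : Profile ι S A) : Prop :=
  G.WAcceptableCorr w (corrOf σ)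

/-- A strategy profile is min-max `ε`-acceptable if it is `w`-acceptable for
`w i s = v¹_i(s) - ε`. -/
def MinmaxAcceptable (ε : ℝ) (σ : Profile ι S A) : Prop :=
  G.WAcceptable (fun s i => G.v1 i s - ε) σ

/-- A correlated strategy is min-max `ε`-acceptable if it is `w`-acceptable for
`w i s = v¹_i(s) - ε`. -/
def MinmaxAcceptableCorr (ε : ℝ) (τ : CorrStrategy ι S A) : Prop :=
  G.WAcceptableCorr (fun s i => G.v1 i s - ε) τ

/-- `w` is a uniform equilibrium payoff. -/
def UnifEqPayoff (w : S → ι → ℝ) : Prop :=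
  ∀ ε : ℝ, 0 < ε → ∃ lam0 : ℝ, 0 ≤ lam0 ∧ lam0 < 1 ∧ ∃ σ : Profile ι S A,
    ∀ (s1 : S) (i : ι) (lam : ℝ), lam0 ≤ lam → lam < 1 →
      |G.discP lam i s1 σ - w s1 i| < ε ∧
      ∀ τi : Hist S A → ProbVec (A i),
        G.discP lam i s1 (replaceStrat σ i τi) - ε ≤ G.discP lam i s1 σ

end StochGame

/-- A finite automaton with stochastic transitions that implements a behavior strategy of
player `i`: its inputs are pairs (action profile, new state of the game) and its outputs are
mixed actions of player `i`. -/
structure Auto (ι S : Type*) (A : ι → Type*) [Fintype ι] [DecidableEq ι] [Fintype S]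
    [∀ j, Fintype (A j)] (i : ι) where
  Q : Type
  [fintypeQ : Fintype Q]
  f : Q → ProbVec (A i)
  g : Q → ActProf A × S → ProbVec Q
  init : Q

attribute [instance] Auto.fintypeQ

namespace Auto

variable {ι S : Type*} {A : ι → Type*} [Fintype ι] [DecidableEq ι] [Fintype S]
  [∀ j, Fintype (A j)] {i : ι}

/-- The (unnormalized) likelihood that, along the given finite history, the automaton's
private randomization is consistent with player `i`'s realized actions and the automaton
ends up in state `qq`. -/
def wt (M : Auto ι S A i) : List (S × ActProf A) → S → M.Q → ℝ
  | [], _, qq => if qq = M.init then 1 else 0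
  | p :: l, s, qq =>
      ∑ q' : M.Q, M.wt l p.1 q' * (M.f q').1 (p.2 i) * (M.g q' (p.2, s)).1 qq

/-- The automaton `M` implements the behavior strategy `σi` of player `i`: at every
finite history that is consistent with the automaton's behavior, `σi` plays the mixed
action obtained by averaging the automaton's output over its (conditional) state. -/
def Implements (M : Auto ι S A i) (σi : Hist S A → ProbVec (A i)) : Prop :=
  ∀ h : Hist S A, 0 < ∑ qq : M.Q, M.wt h.1 h.2 qq →
    ∀ b : A i, (σi h).1 b * ∑ qq : M.Q, M.wt h.1 h.2 qq
      = ∑ qq : M.Q, M.wt h.1 h.2 qq * (M.f qq).1 b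

end Auto

/-- Player `i`'s behavior strategy `σi` can be implemented by an automaton with at most
`n` states. -/
def ImplementableBy {ι S : Type*} {A : ι → Type*} [Fintype ι] [DecidableEq ι] [Fintype S]
    [∀ j, Fintype (A j)] (i : ι) (σi : Hist S A → ProbVec (A i)) (n : ℕ) : Prop :=
  ∃ M : Auto ι S A i, M.Implements σi ∧ Nat.card M.Q ≤ n

namespace StochGame

variable {ι S : Type*} {A : ι → Type*} [Fintype ι] [DecidableEq ι] [Fintype S]
  [∀ i, Fintype (A i)] [Nonempty S] [∀ i, Nonempty (A i)]

variable (G : StochGame ι S A)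

/-- The probability `q(D | s, a)` of moving into the set `D` from state `s` when the
action profile `a` is played. -/
def qD (s : S) (a : ActProf A) (D : Set S) : ℝ :=
  ∑ s' : S, if s' ∈ D then G.q s a s' else 0

/-- The probability of moving into the set `D` from state `s` when the mixed action
profile `x` is played. -/
def qXD (s : S) (x : ∀ i, ProbVec (A i)) (D : Set S) : ℝ :=
  ∑ a : ActProf A, (prodDist x).1 a * G.qD s a D

/-- The probability, from the initial state `s1` under the correlated strategy `τ`,
that the play reaches the set `D` (strictly) before leaving the set `C`:
`P(ν_D < ν_{Cᶜ})`. -/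
def reachInProb (τ : CorrStrategy ι S A) (s1 : S) (C D : Set S) : ℝ :=
  ∑' n : ℕ, ∑ f : Fin n → S × ActProf A, ∑ s : S,
    if (∀ k, (f k).1 ∈ C ∧ (f k).1 ∉ D) ∧ s ∈ C ∧ s ∈ D
    then G.hprob τ s1 (List.ofFn f) s else 0

/-- The probability, from the initial state `s1` under the correlated strategy `τ`,
that the play eventually leaves the set `C`: `P(ν_{Cᶜ} < ∞)`. -/
def leaveProb (τ : CorrStrategy ι S A) (s1 : S) (C : Set S) : ℝ :=
  ∑' n : ℕ, ∑ f : Fin n → S × ActProf A, ∑ s : S,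
    if (∀ k, (f k).1 ∈ C) ∧ s ∉ C then G.hprob τ s1 (List.ofFn f) s else 0

/-- The expectation, from the initial state `s1` under the correlated strategy `τ`, of
`φ(s^{ν_{Cᶜ}})`, where `ν_{Cᶜ}` is the first stage at which the play is outside `C`. -/
def exitVal (τ : CorrStrategy ι S A) (s1 : S) (C : Set S) (φ : S → ℝ) : ℝ :=
  ∑' n : ℕ, ∑ f : Fin n → S × ActProf A, ∑ s : S,
    if (∀ k, (f k).1 ∈ C) ∧ s ∉ C then G.hprob τ s1 (List.ofFn f) s * φ s else 0

/-- The payoff of the one-shot game `G(s)`: the expectation of tomorrow's uniform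
min-max value of player `i` when the action profile `a` is played at state `s`. -/
def ustar (i : ι) (s : S) (a : ActProf A) : ℝ := ∑ s' : S, G.q s a s' * G.v1 i s'

/-- The multilinear extension of the one-shot payoff `ustar` to mixed action profiles. -/
def ustarX (i : ι) (s : S) (x : ∀ i, ProbVec (A i)) : ℝ :=
  ∑ a : ActProf A, (prodDist x).1 a * G.ustar i s a

/-- The set `E(s)` of mixed-action Nash equilibria of the one-shot game `G(s)`. -/
def Eset (s : S) : Set (∀ i, ProbVec (A i)) :=
  {x | ∀ i : ι, ∀ d : ProbVec (A i),
    G.ustarX i s (Function.update x i d) ≤ G.ustarX i s x}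

/-- A set of states `D` is closed under `E` if no mixed action profile in `E(s)`, for
`s ∈ D`, can take the play out of `D`. -/
def ClosedUnderE (D : Set S) : Prop := ∀ s ∈ D, ∀ x ∈ G.Eset s, G.qXD s x D = 1

/-- State `s` leads in `C` to state `s'`: some strategy profile guarantees that the play
reaches `s'` before leaving `C`, with probability 1. -/
def LeadsIn (C : Set S) (s s' : S) : Prop :=
  ∃ σ : Profile ι S A, G.reachInProb (corrOf σ) s C {s'} = 1

/-- A (nonempty) set of states `C` is communicating under `E`. -/
def CommUnderE (C : Set S) : Prop :=
  C.Nonempty ∧ G.ClosedUnderE C ∧ (∀ s ∈ C, ∀ s' ∈ C, G.LeadsIn C s s') ∧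
    ∀ (i : ι), ∀ s ∈ C, ∀ s' ∈ C, G.v1 i s = G.v1 i s'

/-- A maximal communicating set under `E`. -/
def MaxCommUnderE (C : Set S) : Prop :=
  G.CommUnderE C ∧ ∀ C', G.CommUnderE C' → C ⊆ C' → C' = C

/-- The union of all maximal communicating sets under `E`. -/
def Cstar : Set S := {s | ∃ C : Set S, G.MaxCommUnderE C ∧ s ∈ C}

/-- The probability that the pair (state, action profile) at stage `n+1` equals `(s,a)`. -/
def saProb (τ : CorrStrategy ι S A) (s1 : S) (n : ℕ) (s : S) (a : ActProf A) : ℝ :=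
  ∑ f : Fin n → S × ActProf A,
    G.hprob τ s1 (List.ofFn f) s * (τ (List.ofFn f, s)).1 a

/-- The Cesàro averages whose limit (if it exists) is the state-action frequency. -/
def freqCesaro (τ : CorrStrategy ι S A) (s1 : S) (s : S) (a : ActProf A) : ℕ → ℝ :=
  fun N => (N : ℝ)⁻¹ * ∑ n ∈ Finset.range N, G.saProb τ s1 n s a

/-- The state-action frequency vector of `τ` at the initial state `s1` is well defined. -/
def FreqExists (τ : CorrStrategy ι S A) (s1 : S) : Prop :=
  ∀ (s : S) (a : ActProf A), ∃ r : ℝ, Tendsto (G.freqCesaro τ s1 s a) atTop (𝓝 r)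

/-- The state-action frequency vector of `τ` at the initial state `s1`. -/
def freq (τ : CorrStrategy ι S A) (s1 : S) : S → ActProf A → ℝ :=
  fun s a => limUnder atTop (G.freqCesaro τ s1 s a)

/-- The long-run average payoff of player `i` associated with a state-action frequency
vector `ρ`. -/
def freqPay (i : ι) (ρ : S → ActProf A → ℝ) : ℝ := ∑ s : S, ∑ a : ActProf A, ρ s a * G.u i s a

/-- A nonempty set of states `D` is closed under the stationary profile `x`. -/
def ClosedUnderStat (x : ∀ i, S → ProbVec (A i)) (D : Set S) : Prop :=
  D.Nonempty ∧ ∀ s ∈ D, G.qXD s (fun i => x i s) D = 1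

/-- `D` is an irreducible set with respect to the stationary profile `x`: it is closed
under `x` and contains no other closed set. -/
def IrredUnder (x : ∀ i, S → ProbVec (A i)) (D : Set S) : Prop :=
  G.ClosedUnderStat x D ∧ ∀ D' ⊂ D, ¬ G.ClosedUnderStat x D'

/-- The set `R(C)`: the convex hull of the state-action frequency vectors of stationary
strategy profiles started inside an irreducible set contained in `C`. -/
def RC (C : Set S) : Set (S → ActProf A → ℝ) :=
  convexHull ℝ {ρ | ∃ (x : ∀ i, S → ProbVec (A i)) (D : Set S) (s1 : S),
    G.IrredUnder x D ∧ D ⊆ C ∧ s1 ∈ D ∧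
    G.FreqExists (corrOf (statProf x)) s1 ∧ ρ = G.freq (corrOf (statProf x)) s1}

/-- `(s, a)` is an exit from the set `C`: `s ∈ C` and playing `a` at `s` leaves `C` with
positive probability. -/
def IsExit (C : Set S) (s : S) (a : ActProf A) : Prop := s ∈ C ∧ G.qD s a C < 1

/-- The probability that the first exit from `C` that is played is `(s, a)`:
`μ(s1, τ, C; s, a) = P(s^{ν*_C} = s, a^{ν*_C} = a)`. -/
def exitMu (τ : CorrStrategy ι S A) (s1 : S) (C : Set S) (s : S) (a : ActProf A) : ℝ :=
  ∑' n : ℕ, ∑ f : Fin n → S × ActProf A,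
    if ∀ k, ¬ G.IsExit C (f k).1 (f k).2
    then G.hprob τ s1 (List.ofFn f) s * (τ (List.ofFn f, s)).1 a else 0

/-- A strategy profile is an `ε`-perturbation of `E` if after every finite history the
mixed action profile that is played is `ε`-close to some element of `E(s)`, where `s`
is the current state. -/
def Perturb (ε : ℝ) (σ : Profile ι S A) : Prop :=
  ∀ h : Hist S A, ∃ x ∈ G.Eset h.2, ∀ (i : ι) (b : A i), |(σ i h).1 b - (x i).1 b| < ε

/-- The expected continuation min-max value of player `i` at state `s` when player `i`
plays action `ai` and the other players play their marginals under the correlated mixed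
action `α`. -/
def ustarDev (i : ι) (s : S) (ai : A i) (α : ProbVec (ActProf A)) : ℝ :=
  ∑ a : ActProf A, α.1 a * G.ustar i s (Function.update a i ai)

/-- A correlated strategy is `ε`-individually rational. -/
def IndivRationalCorr (ε : ℝ) (τ : CorrStrategy ι S A) : Prop :=
  ∀ (h : Hist S A) (i : ι) (ai : A i), ∃ L : ℝ,
    Tendsto (fun lam => G.disc lam i h.2 (contC τ h)) (𝓝[<] (1 : ℝ)) (𝓝 L) ∧
    G.ustarDev i h.2 ai (τ h) ≤ L + ε

/-- A strategy profile is `ε`-individually rational. -/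
def IndivRational (ε : ℝ) (σ : Profile ι S A) : Prop :=
  G.IndivRationalCorr ε (corrOf σ)

/-- A strategy profile is subgame-perfect min-max `ε`-acceptable. -/
def SubgamePerfectMinmaxAcceptable (ε : ℝ) (σ : Profile ι S A) : Prop :=
  ∀ (i : ι) (h : Hist S A), ∃ lam0 : ℝ, 0 ≤ lam0 ∧ lam0 < 1 ∧
    ∀ lam : ℝ, lam0 ≤ lam → lam < 1 →
      G.v1 i h.2 - ε ≤ G.disc lam i h.2 (contC (corrOf σ) h)

/-- The prefix of the history `(l, s)` having `m` past stages (`m < l.length`). -/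
def histPrefix (l : List (S × ActProf A)) (m : ℕ) (s : S) : Hist S A :=
  match l.drop (l.length - m - 1) with
  | [] => (l, s)
  | p :: rest => (rest, p.1)

/-- The expectation of `v¹_i(s^ν)`, where `ν` is the stopping time that stops at the
first history at which the stopping rule `r` holds, and in any case no later than after
`N ≥ 1` further stages. -/
def stopVal (τ : CorrStrategy ι S A) (s1 : S) (i : ι) (N : ℕ) (r : Hist S A → Prop) : ℝ :=
  ∑ k ∈ Finset.Icc 1 N, ∑ f : Fin k → S × ActProf A, ∑ s : S,
    if (r (List.ofFn f, s) ∨ k = N) ∧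
        (∀ m, 1 ≤ m → m < k → ¬ r (histPrefix (List.ofFn f) m s))
    then G.hprob τ s1 (List.ofFn f) s * G.v1 i s else 0

/-- The conditions (SV.1)-(SV.4) satisfied by the strategy profiles constructed by
Solan and Vieille (2002). -/
def SVConds (ε : ℝ) (σ : Profile ι S A) : Prop :=
  G.Perturb ε σ ∧
  (∀ h : Hist S A, G.FreqExists (contC (corrOf σ) h) h.2) ∧
  (∀ h : Hist S A, ∀ N : ℕ, 1 ≤ N → ∀ r : Hist S A → Prop, ∀ i : ι,
    G.v1 i h.2 - ε ≤ G.stopVal (contC (corrOf σ) h) h.2 i N r) ∧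
  (∀ (h : Hist S A) (i : ι),
    G.v1 i h.2 - ε ≤ G.freqPay i (G.freq (contC (corrOf σ) h) h.2))

/-- A communicating set `C` has type A with respect to the family `(σ̂^ε)`:
for some finite history, with probability bounded away from zero (as `ε → 0`)
the play never leaves `C`. -/
def TypeA (hatσ : ℝ → Profile ι S A) (C : Set S) : Prop :=
  ∃ h : Hist S A,
    0 < Filter.limsup (fun ε => 1 - G.leaveProb (corrOf (hatσ ε)) h.2 C) (𝓝[>] (0 : ℝ))

end StochGame

/-!
Suppose no unilateral deviation from `a` keeps the play in `C`. After any history ending at `s`,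
the mixed profile of `σ^ε` is `ε`-close to some `x ∈ E(s)`. As `C` is closed under `E`, every pure
profile in the support of `x` stays in `C`, so some player `i` plays `a i` with probability `0`
under `x`, hence with probability `< ε` under `σ^ε`. Every other action of `i` turns `a` into an
exit, so `a` is played at most `2ε` times as often as the exits at `s`. Since the first exit has
total probability at most `1`, this gives `μ(s¹, σ^ε, C; s, a) ≤ 2ε`, and the limit is `0`.
-/

namespace Function

theorem existsUnique_ne_update {ι : Type*} [DecidableEq ι] {A : ι → Type*}
    (a : ∀ i, A i) {i : ι} {b : A i} (hb : b ≠ a i) : ∃! j, a j ≠ Function.update a i b j := by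
  refine ⟨i, by simpa using hb.symm, fun j hj => ?_⟩
  by_contra hji
  exact hj (Function.update_of_ne hji b a).symm

end Function

section ProductDistribution

variable {ι : Type*} {A : ι → Type*} [Fintype ι] [DecidableEq ι] [∀ i, Fintype (A i)]

theorem prodDist_apply (y : ∀ i, ProbVec (A i)) (a : ActProf A) :
    (prodDist y).1 a = ∏ i, (y i).1 (a i) := rfl

theorem prodDist_update (y : ∀ i, ProbVec (A i)) (a : ActProf A) (i : ι) (b : A i) :
    (prodDist y).1 (Function.update a i b)
      = (y i).1 b * ∏ j ∈ Finset.univ.erase i, (y j).1 (a j) := by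
  rw [prodDist_apply, ← Finset.mul_prod_erase _ _ (Finset.mem_univ i), Function.update_self]
  congr 1
  exact Finset.prod_congr rfl fun j hj => by rw [Function.update_of_ne (Finset.ne_of_mem_erase hj)]

theorem prodDist_eq_mul_prod_erase (y : ∀ i, ProbVec (A i)) (a : ActProf A) (i : ι) :
    (prodDist y).1 a = (y i).1 (a i) * ∏ j ∈ Finset.univ.erase i, (y j).1 (a j) := by
  rw [← prodDist_update, Function.update_eq_self]

theorem sum_prodDist_update_erase (y : ∀ i, ProbVec (A i)) (a : ActProf A) (i : ι) :
    ∑ b ∈ Finset.univ.erase (a i), (prodDist y).1 (Function.update a i b)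
      = (1 - (y i).1 (a i)) * ∏ j ∈ Finset.univ.erase i, (y j).1 (a j) := by
  simp only [prodDist_update, ← Finset.sum_mul]
  rw [Finset.sum_erase_eq_sub (Finset.mem_univ _), (y i).2.2]

theorem one_sub_mul_prodDist_le {y : ∀ i, ProbVec (A i)} {a : ActProf A} {i : ι} {ε : ℝ}
    (hε : (y i).1 (a i) ≤ ε) :
    (1 - ε) * (prodDist y).1 a
      ≤ ε * ∑ b ∈ Finset.univ.erase (a i), (prodDist y).1 (Function.update a i b) := by
  have hP : 0 ≤ ∏ j ∈ Finset.univ.erase i, (y j).1 (a j) :=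
    Finset.prod_nonneg fun j _ => (y j).2.1 _
  rw [sum_prodDist_update_erase, prodDist_eq_mul_prod_erase y a i]
  nlinarith

end ProductDistribution

namespace StochGame

variable {ι S : Type*} {A : ι → Type*} [Fintype ι] [DecidableEq ι] [Fintype S]
  [∀ i, Fintype (A i)] (G : StochGame ι S A)

theorem qD_le_one (s : S) (a : ActProf A) (D : Set S) : G.qD s a D ≤ 1 := by
  rw [← G.q_sum s a]
  exact Finset.sum_le_sum fun s' _ => by split_ifs <;> simp [G.q_nonneg]

theorem qD_eq_one_of_qXD_eq_one {s : S} {x : ∀ i, ProbVec (A i)} {D : Set S}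
    (hx : G.qXD s x D = 1) {a : ActProf A} (ha : ∀ i, 0 < (x i).1 (a i)) : G.qD s a D = 1 := by
  have hsum : ∑ b, (prodDist x).1 b * (1 - G.qD s b D) = 0 := by
    simp only [mul_sub, mul_one, Finset.sum_sub_distrib, (prodDist x).2.2]
    rw [← qXD, hx, sub_self]
  have hzero := (Finset.sum_eq_zero_iff_of_nonneg fun b _ =>
    mul_nonneg ((prodDist x).2.1 b) (sub_nonneg.2 (G.qD_le_one s b D))).1 hsum a
    (Finset.mem_univ a)
  have hpos : 0 < (prodDist x).1 a := by
    rw [prodDist_apply]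
    exact Finset.prod_pos fun i _ => ha i
  linarith [(mul_eq_zero.1 hzero).resolve_left hpos.ne']

theorem exists_eq_zero_of_isExit {C : Set S} (hC : G.ClosedUnderE C) {s : S} {a : ActProf A}
    (hexit : G.IsExit C s a) {x : ∀ i, ProbVec (A i)} (hx : x ∈ G.Eset s) :
    ∃ i, (x i).1 (a i) = 0 := by
  by_contra! hne
  have := G.qD_eq_one_of_qXD_eq_one (hC s hexit.1 x hx) fun i => ((x i).2.1 _).lt_of_ne' (hne i)
  exact hexit.2.ne this

theorem prodDist_le_two_mul_sum_exit {C : Set S} (hC : G.ClosedUnderE C) {s : S}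
    {a : ActProf A} (hexit : G.IsExit C s a)
    (hdev : ∀ i, ∀ b ≠ a i, G.IsExit C s (Function.update a i b))
    {ε : ℝ} (hε : ε ≤ 1 / 2) {x y : ∀ i, ProbVec (A i)} (hx : x ∈ G.Eset s)
    (hxy : ∀ i b, |(y i).1 b - (x i).1 b| < ε) :
    (prodDist y).1 a ≤ 2 * ε * ∑ a' ∈ Finset.univ.filter (G.IsExit C s), (prodDist y).1 a' := by
  obtain ⟨i, hxi⟩ := G.exists_eq_zero_of_isExit hC hexit hx
  have hyi : (y i).1 (a i) ≤ ε := by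
    simpa [hxi, abs_of_nonneg ((y i).2.1 _)] using (hxy i (a i)).le
  have hε0 : 0 ≤ ε := (abs_nonneg _).trans (hxy i (a i)).le
  have hdevs : ∑ b ∈ Finset.univ.erase (a i), (prodDist y).1 (Function.update a i b)
      ≤ ∑ a' ∈ Finset.univ.filter (G.IsExit C s), (prodDist y).1 a' := by
    rw [← Finset.sum_image (Function.update_injective a i).injOn]
    refine Finset.sum_le_sum_of_subset_of_nonneg ?_ fun a' _ _ => (prodDist y).2.1 a'
    intro a' ha'
    obtain ⟨b, hb, rfl⟩ := Finset.mem_image.1 ha'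
    exact Finset.mem_filter.2 ⟨Finset.mem_univ _, hdev i b (Finset.ne_of_mem_erase hb)⟩
  have hya := (prodDist y).2.1 a
  nlinarith [one_sub_mul_prodDist_le hyi]

section FirstExit

variable (τ : CorrStrategy ι S A) (s1 : S) (C : Set S)

theorem hprob_nonneg : ∀ (l : List (S × ActProf A)) (t : S), 0 ≤ G.hprob τ s1 l t
  | [], t => by rw [hprob]; split_ifs <;> norm_num
  | p :: l, t =>
    mul_nonneg (mul_nonneg (hprob_nonneg l p.1) ((τ (l, p.1)).2.1 _)) (G.q_nonneg _ _ _)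

theorem sum_hprob_cons (p : S × ActProf A) (l : List (S × ActProf A)) :
    ∑ t, G.hprob τ s1 (p :: l) t = G.hprob τ s1 l p.1 * (τ (l, p.1)).1 p.2 := by
  simp only [hprob, ← Finset.mul_sum, G.q_sum, mul_one]

theorem sum_hprob_mul (l : List (S × ActProf A)) :
    ∑ p : S × ActProf A, G.hprob τ s1 l p.1 * (τ (l, p.1)).1 p.2 = ∑ t, G.hprob τ s1 l t := by
  simp only [Fintype.sum_prod_type, ← Finset.mul_sum, (τ _).2.2, mul_one]

-- `P(ν*_C > n)`
def noExitProb (n : ℕ) : ℝ :=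
  ∑ f : Fin n → S × ActProf A,
    if ∀ k, ¬ G.IsExit C (f k).1 (f k).2 then ∑ t, G.hprob τ s1 (List.ofFn f) t else 0

-- `P(ν*_C > n, s^{n+1} = t, a^{n+1} = b)`, the `n`-th term of the series `exitMu`
def exitMuStage (n : ℕ) (t : S) (b : ActProf A) : ℝ :=
  ∑ f : Fin n → S × ActProf A,
    if ∀ k, ¬ G.IsExit C (f k).1 (f k).2
    then G.hprob τ s1 (List.ofFn f) t * (τ (List.ofFn f, t)).1 b else 0

theorem noExitProb_zero : G.noExitProb τ s1 C 0 = 1 := by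
  simp [noExitProb, hprob]

theorem noExitProb_succ (n : ℕ) :
    G.noExitProb τ s1 C (n + 1)
      = ∑ p ∈ Finset.univ.filter (fun p : S × ActProf A => ¬ G.IsExit C p.1 p.2),
        G.exitMuStage τ s1 C n p.1 p.2 := by
  rw [noExitProb, ← (Fin.consEquiv _).sum_comp, Fintype.sum_prod_type, Finset.sum_filter]
  simp only [exitMuStage, Fin.consEquiv, Equiv.coe_fn_mk, List.ofFn_cons, Fin.forall_fin_succ,
    Fin.cons_zero, Fin.cons_succ, sum_hprob_cons]
  refine Finset.sum_congr rfl fun p _ => ?_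
  split_ifs with hp <;> simp [hp]

theorem noExitProb_eq_add (n : ℕ) :
    G.noExitProb τ s1 C n = G.noExitProb τ s1 C (n + 1)
      + ∑ p ∈ Finset.univ.filter (fun p : S × ActProf A => G.IsExit C p.1 p.2),
        G.exitMuStage τ s1 C n p.1 p.2 := by
  rw [noExitProb_succ, Finset.sum_filter_not_add_sum_filter]
  simp only [noExitProb, exitMuStage]
  rw [Finset.sum_comm]
  refine Finset.sum_congr rfl fun f _ => ?_
  split_ifs
  · exact (G.sum_hprob_mul τ s1 _).symm
  · simp

theorem noExitProb_nonneg (n : ℕ) : 0 ≤ G.noExitProb τ s1 C n :=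
  Finset.sum_nonneg fun _ _ => by
    split_ifs
    exacts [Finset.sum_nonneg fun _ _ => G.hprob_nonneg τ s1 _ _, le_rfl]

theorem exitMuStage_nonneg (n : ℕ) (t : S) (b : ActProf A) : 0 ≤ G.exitMuStage τ s1 C n t b :=
  Finset.sum_nonneg fun _ _ => by
    split_ifs
    exacts [mul_nonneg (G.hprob_nonneg τ s1 _ _) ((τ _).2.1 _), le_rfl]

theorem sum_range_sum_exitMuStage (N : ℕ) :
    ∑ n ∈ Finset.range N,
        ∑ p ∈ Finset.univ.filter (fun p : S × ActProf A => G.IsExit C p.1 p.2),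
          G.exitMuStage τ s1 C n p.1 p.2
      = 1 - G.noExitProb τ s1 C N := by
  induction N with
  | zero => simp [noExitProb_zero]
  | succ N ih => rw [Finset.sum_range_succ, ih, G.noExitProb_eq_add τ s1 C N]; ring

theorem sum_exitMuStage_filter_le (n : ℕ) (s : S) :
    ∑ a' ∈ Finset.univ.filter (G.IsExit C s), G.exitMuStage τ s1 C n s a'
      ≤ ∑ p ∈ Finset.univ.filter (fun p : S × ActProf A => G.IsExit C p.1 p.2),
        G.exitMuStage τ s1 C n p.1 p.2 := by
  rw [Finset.sum_filter, Finset.sum_filter, Fintype.sum_prod_type]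
  exact Finset.single_le_sum (f := fun t => ∑ b, if G.IsExit C t b then _ else 0)
    (fun t _ => Finset.sum_nonneg fun b _ => by
      split_ifs
      exacts [G.exitMuStage_nonneg τ s1 C n t b, le_rfl]) (Finset.mem_univ s)

theorem exitMu_le {s : S} {a : ActProf A} {c : ℝ} (hc : 0 ≤ c)
    (h : ∀ l, (τ (l, s)).1 a ≤ c * ∑ a' ∈ Finset.univ.filter (G.IsExit C s), (τ (l, s)).1 a') :
    G.exitMu τ s1 C s a ≤ c := by
  have hstage : ∀ n, G.exitMuStage τ s1 C n s a
      ≤ c * ∑ a' ∈ Finset.univ.filter (G.IsExit C s), G.exitMuStage τ s1 C n s a' := by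
    intro n
    simp only [exitMuStage, Finset.mul_sum]
    rw [Finset.sum_comm]
    refine Finset.sum_le_sum fun f _ => ?_
    split_ifs
    · simpa only [← Finset.mul_sum, mul_left_comm c] using
        mul_le_mul_of_nonneg_left (h _) (G.hprob_nonneg τ s1 _ _)
    · simp
  refine Real.tsum_le_of_sum_range_le (fun n => G.exitMuStage_nonneg τ s1 C n s a) fun N => ?_
  calc ∑ n ∈ Finset.range N, G.exitMuStage τ s1 C n s a
      ≤ ∑ n ∈ Finset.range N, c * ∑ p ∈ Finset.univ.filter
          (fun p : S × ActProf A => G.IsExit C p.1 p.2), G.exitMuStage τ s1 C n p.1 p.2 :=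
        Finset.sum_le_sum fun n _ => (hstage n).trans
          (mul_le_mul_of_nonneg_left (G.sum_exitMuStage_filter_le τ s1 C n s) hc)
    _ = c * (1 - G.noExitProb τ s1 C N) := by rw [← Finset.mul_sum, sum_range_sum_exitMuStage]
    _ ≤ c := by nlinarith [G.noExitProb_nonneg τ s1 C N]

end FirstExit

end StochGame

open StochGame in
theorem exit_with_positive_limit_probability_has_unilateral_stay_general
    {ι S : Type*} {A : ι → Type*} [Fintype ι] [DecidableEq ι] [Fintype S]
    [∀ i, Fintype (A i)]
    (G : StochGame ι S A)
    (C : Set S) (hC : G.CommUnderE C) (s1 : S)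
    (σ : ℝ → Profile ι S A) (hper : ∀ ε : ℝ, 0 < ε → G.Perturb ε (σ ε))
    (s : S) (a : ActProf A) (hexit : G.IsExit C s a)
    (m : ℝ)
    (hm : Filter.Tendsto (fun ε => G.exitMu (corrOf (σ ε)) s1 C s a)
      (nhdsWithin 0 (Set.Ioi (0 : ℝ))) (nhds m))
    (hmpos : 0 < m) :
    ∃ a' : ActProf A, G.qD s a' C = 1 ∧ ∃! i : ι, a i ≠ a' i := by
  by_contra H
  have hdev : ∀ i, ∀ b ≠ a i, G.IsExit C s (Function.update a i b) := fun i b hb =>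
    ⟨hexit.1, (G.qD_le_one _ _ _).lt_of_ne fun hstay =>
      H ⟨_, hstay, Function.existsUnique_ne_update a hb⟩⟩
  have hsmall : ∀ ε ∈ Set.Ioc (0 : ℝ) (1 / 2), G.exitMu (corrOf (σ ε)) s1 C s a ≤ 2 * ε :=
    fun ε hε => G.exitMu_le _ s1 C (by linarith [hε.1]) fun l => by
      obtain ⟨x, hx, hxy⟩ := hper ε hε.1 (l, s)
      exact G.prodDist_le_two_mul_sum_exit hC.2.1 hexit hdev hε.2 hx hxy
  have htwo : Filter.Tendsto (fun ε : ℝ => 2 * ε) (𝓝[>] 0) (𝓝 0) :=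
    tendsto_nhdsWithin_of_tendsto_nhds (by simpa using (tendsto_id (x := 𝓝 (0 : ℝ))).const_mul 2)
  have hm0 : m ≤ 0 := le_of_tendsto_of_tendsto hm htwo
    (Filter.mem_of_superset (Ioc_mem_nhdsGT one_half_pos) hsmall)
  exact hmpos.not_ge hm0

open StochGame in
/-- If `(s, a)` is an exit from a communicating set `C` whose limit exit probability
under a family of ε-perturbations of `E` is positive, then there is an action profile
`a'` that keeps the play in `C` and differs from `a` in the action of exactly one
player. -/
theorem exit_with_positive_limit_probability_has_unilateral_stay
    {ι S : Type*} {A : ι → Type*} [Fintype ι] [DecidableEq ι] [Fintype S]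
    [∀ i, Fintype (A i)] [Nonempty ι] [Nonempty S] [∀ i, Nonempty (A i)]
    (G : StochGame ι S A) (hu : ∀ i s a, |G.u i s a| ≤ 1)
    (C : Set S) (hC : G.CommUnderE C) (s1 : S) (hs1 : s1 ∈ C)
    (σ : ℝ → Profile ι S A) (hper : ∀ ε : ℝ, 0 < ε → G.Perturb ε (σ ε))
    (hlim : ∀ (s : S) (a : ActProf A), G.IsExit C s a → ∃ m : ℝ,
      Filter.Tendsto (fun ε => G.exitMu (corrOf (σ ε)) s1 C s a)
        (nhdsWithin 0 (Set.Ioi (0 : ℝ))) (nhds m))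
    (s : S) (a : ActProf A) (hexit : G.IsExit C s a)
    (m : ℝ)
    (hm : Filter.Tendsto (fun ε => G.exitMu (corrOf (σ ε)) s1 C s a)
      (nhdsWithin 0 (Set.Ioi (0 : ℝ))) (nhds m))
    (hmpos : 0 < m) :
    ∃ a' : ActProf A, G.qD s a' C = 1 ∧ ∃! i : ι, a i ≠ a' i :=
  exit_with_positive_limit_probability_has_unilateral_stay_general G C hC s1 σ hper s a hexit m hm
    hmpos
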